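/- Let n ≥ 1, let B be a real n×n Metzler Hurwitz matrix, and let h ∈ ℝ^n and k ∈ ℝ^(n+1) satisfy h i ≥ 0 for all i, k i ≥ 0 for all i < n, and B i j − (h i * k j)/exp(k n) ≥ 0 for all i ≠ j with i, j < n. Define the (n+1)×(n+1) matrix A by A i j = B i j − (h i * k j)/exp(k n) for i, j < n, A i n = h i for i < n, A n j = k j for j < n, and A n n = −exp(k n). Then A is a Metzler Hurwitz matrix. -/

import Mathlib

open Matrix

/-- A real square matrix is Hurwitz if every eigenvalue of its complexification
has negative real part. -/
def IsHurwitz {n : ℕ} (M : Matrix (Fin n) (Fin n) ℝ) : Prop :=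
  ∀ μ ∈ spectrum ℂ (M.map (fun x => (x : ℂ))), μ.re < 0

/-- A real square matrix is Metzler if all its off-diagonal entries are nonnegative. -/
def IsMetzler {n : ℕ} (M : Matrix (Fin n) (Fin n) ℝ) : Prop :=
  ∀ i j, i ≠ j → 0 ≤ M i j

set_option linter.unusedSectionVars false
set_option linter.unreachableTactic false
set_option linter.unusedTactic false
set_option maxHeartbeats 1000000

section DetNZ
variable {n : ℕ}

lemma map_smul_one_sub (M : Matrix (Fin n) (Fin n) ℝ) (s : ℝ) :
    (s • (1 : Matrix (Fin n) (Fin n) ℝ) - M).map (fun x => (x : ℂ)) =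
      (s : ℂ) • 1 - M.map (fun x => (x : ℂ)) := by
  ext i j
  by_cases h : i = j <;>
    simp [Matrix.map_apply, Matrix.one_apply, h, Matrix.smul_apply, Matrix.sub_apply]

lemma det_resolvent_ne_zero {M : Matrix (Fin n) (Fin n) ℝ} (hB : IsHurwitz M)
    {s : ℝ} (hs : 0 ≤ s) : (s • (1 : Matrix (Fin n) (Fin n) ℝ) - M).det ≠ 0 := by
  intro h0
  have h1 := (algebraMap ℝ ℂ).map_det (s • (1 : Matrix (Fin n) (Fin n) ℝ) - M)
  rw [h0, map_zero, RingHom.mapMatrix_apply] at h1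
  have hC : ((s : ℂ) • (1 : Matrix (Fin n) (Fin n) ℂ) - M.map (fun x => (x : ℂ))).det = 0 := by
    rw [← map_smul_one_sub]
    convert h1.symm using 2
    ext i j; simp [Matrix.map_apply]
  have hmem : (s : ℂ) ∈ spectrum ℂ (M.map (fun x => (x : ℂ))) := by
    rw [spectrum.mem_iff, Algebra.algebraMap_eq_smul_one]
    rw [Matrix.isUnit_iff_isUnit_det, isUnit_iff_ne_zero]
    simpa using hC
  have := hB _ hmem
  simp at this
  linarith
end DetNZ

section Neumann
variable {m : Type*} [Fintype m] [DecidableEq m]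
attribute [local instance] Matrix.linftyOpNormedRing Matrix.linftyOpNormedAlgebra

lemma entry_le_norm (A : Matrix m m ℝ) (i j : m) : ‖A i j‖ ≤ ‖A‖ := by
  rw [← coe_nnnorm, ← coe_nnnorm, NNReal.coe_le_coe, Matrix.linfty_opNNNorm_def]
  exact le_trans (Finset.single_le_sum (f := fun j => ‖A i j‖₊) (fun j _ => by positivity)
      (Finset.mem_univ j))
    (Finset.le_sup (f := fun i => ∑ j, ‖A i j‖₊) (Finset.mem_univ i))

lemma pow_entry_nonneg {P : Matrix m m ℝ} (hP : ∀ i j, 0 ≤ P i j) (k : ℕ) :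
    ∀ i j, 0 ≤ (P ^ k) i j := by
  induction k with
  | zero => intro i j; by_cases h : i = j <;> simp [pow_zero, Matrix.one_apply, h]
  | succ k ih =>
    intro i j
    rw [pow_succ, Matrix.mul_apply]
    exact Finset.sum_nonneg fun l _ => mul_nonneg (ih i l) (hP l j)

lemma mul_entry_nonneg {P Q : Matrix m m ℝ} (hP : ∀ i j, 0 ≤ P i j)
    (hQ : ∀ i j, 0 ≤ Q i j) : ∀ i j, 0 ≤ (P * Q) i j := fun i j => by
  rw [Matrix.mul_apply]; exact Finset.sum_nonneg fun l _ => mul_nonneg (hP i l) (hQ l j)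

lemma neumann {P : Matrix m m ℝ} (hP : ∀ i j, 0 ≤ P i j) (hn : ‖P‖ < 1) :
    IsUnit (1 - P).det ∧ ∀ i j, 0 ≤ (1 - P)⁻¹ i j := by
  have hu : IsUnit (1 - P) := isUnit_one_sub_of_norm_lt_one hn
  have hsum : HasSum (fun k : ℕ => P ^ k) (Ring.inverse (1 - P)) :=
    hasSum_geom_series_inverse P hn
  have hmul : (1 - P) * Ring.inverse (1 - P) = 1 := Ring.mul_inverse_cancel _ hu
  have hinv : (1 - P)⁻¹ = Ring.inverse (1 - P) := Matrix.inv_eq_right_inv hmul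
  refine ⟨(Matrix.isUnit_iff_isUnit_det _).mp hu, fun i j => ?_⟩
  rw [hinv]
  let φ : Matrix m m ℝ →ₗ[ℝ] ℝ :=
    { toFun := fun A => A i j, map_add' := fun _ _ => rfl, map_smul' := fun _ _ => rfl }
  let φc : Matrix m m ℝ →L[ℝ] ℝ := φ.mkContinuous 1 (fun A => by
    rw [one_mul]; exact entry_le_norm A i j)
  have := φc.hasSum hsum
  exact hasSum_le (fun k => pow_entry_nonneg hP k i j) hasSum_zero this |>.trans_eq rfl

lemma smul_one_inv {c : ℝ} (hc : c ≠ 0) :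
    (c • (1 : Matrix m m ℝ))⁻¹ = c⁻¹ • (1 : Matrix m m ℝ) :=
  Matrix.inv_eq_right_inv (by
    rw [Matrix.smul_mul, Matrix.mul_smul, one_mul, smul_smul, mul_inv_cancel₀ hc, one_smul])

/-- Base case: the resolvent is entrywise nonnegative for large real `s`. -/
lemma resolvent_nonneg_base {M : Matrix m m ℝ} (hMetz : ∀ i j, i ≠ j → 0 ≤ M i j) :
    ∃ b : ℝ, 0 ≤ b ∧ ∀ s : ℝ, b ≤ s → ∀ i j, 0 ≤ (s • (1 : Matrix m m ℝ) - M)⁻¹ i j := by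
  set c : ℝ := ‖M‖ + 1 with hc
  have hM0 : (0:ℝ) ≤ ‖M‖ := norm_nonneg _
  have hcpos : 0 < c := by positivity
  set N : Matrix m m ℝ := M + c • 1 with hN
  have hNnn : ∀ i j, 0 ≤ N i j := by
    intro i j
    by_cases h : i = j
    · subst h
      have : |M i i| ≤ ‖M‖ := by simpa [Real.norm_eq_abs] using entry_le_norm M i i
      have := abs_le.mp this
      simp only [hN, Matrix.add_apply, Matrix.smul_apply, Matrix.one_apply_eq, smul_eq_mul,
        mul_one]
      linarith
    · simpa [hN, Matrix.add_apply, Matrix.smul_apply, Matrix.one_apply_ne h] using hMetz i j h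
  refine ⟨‖N‖, norm_nonneg _, fun s hs i j => ?_⟩
  have hsc : ‖N‖ < s + c := by linarith
  have hscpos : 0 < s + c := lt_of_le_of_lt (norm_nonneg _) hsc
  set P : Matrix m m ℝ := (s + c)⁻¹ • N with hP
  have hPnn : ∀ i j, 0 ≤ P i j := fun i j => by
    simpa [hP, Matrix.smul_apply] using
      mul_nonneg (inv_nonneg.mpr hscpos.le) (hNnn i j)
  have hPn : ‖P‖ < 1 := by
    rw [hP, norm_smul, Real.norm_eq_abs, abs_of_pos (inv_pos.mpr hscpos)]
    rw [inv_mul_lt_iff₀ hscpos, mul_one]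
    exact hsc
  have hfac : s • (1 : Matrix m m ℝ) - M = ((s + c) • (1 : Matrix m m ℝ)) * (1 - P) := by
    rw [Matrix.smul_mul, one_mul, smul_sub, hP, smul_smul, mul_inv_cancel₀ hscpos.ne', one_smul,
      hN]
    ext i' j'
    by_cases h : i' = j' <;>
      simp [Matrix.sub_apply, Matrix.add_apply, Matrix.smul_apply, Matrix.one_apply, h] <;> ring
  have hinv : (s • (1 : Matrix m m ℝ) - M)⁻¹ = (1 - P)⁻¹ * ((s + c)⁻¹ • 1) := by
    rw [hfac, Matrix.mul_inv_rev, smul_one_inv hscpos.ne']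
  rw [hinv]
  refine mul_entry_nonneg (neumann hPnn hPn).2 (fun i' j' => ?_) i j
  by_cases h : i' = j' <;>
    simp [Matrix.smul_apply, Matrix.one_apply, h, inv_nonneg.mpr hscpos.le]

/-- Step: nonnegativity of the resolvent extends a little to the left. -/
lemma resolvent_nonneg_step {n : ℕ} {M : Matrix (Fin n) (Fin n) ℝ} (hH : IsHurwitz M)
    {s : ℝ} (hs : 0 ≤ s) (hRs : ∀ i j, 0 ≤ (s • (1 : Matrix (Fin n) (Fin n) ℝ) - M)⁻¹ i j) :
    ∃ δ : ℝ, 0 < δ ∧ ∀ t : ℝ, 0 ≤ t → t ≤ s → s - t < δ →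
      ∀ i j, 0 ≤ (t • (1 : Matrix (Fin n) (Fin n) ℝ) - M)⁻¹ i j := by
  set R : Matrix (Fin n) (Fin n) ℝ := (s • (1 : Matrix (Fin n) (Fin n) ℝ) - M)⁻¹ with hR
  refine ⟨(‖R‖ + 1)⁻¹, by positivity, fun t ht hts hlt i j => ?_⟩
  have hdet : IsUnit (s • (1 : Matrix (Fin n) (Fin n) ℝ) - M).det :=
    isUnit_iff_ne_zero.mpr (det_resolvent_ne_zero hH hs)
  have hmulR : (s • (1 : Matrix (Fin n) (Fin n) ℝ) - M) * R = 1 :=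
    Matrix.mul_nonsing_inv _ hdet
  set P : Matrix (Fin n) (Fin n) ℝ := (s - t) • R with hP
  have hPnn : ∀ i' j', 0 ≤ P i' j' := fun i' j' => by
    simpa [hP, Matrix.smul_apply] using mul_nonneg (by linarith) (hRs i' j')
  have hPn : ‖P‖ < 1 := by
    rw [hP, norm_smul, Real.norm_eq_abs, abs_of_nonneg (by linarith : (0:ℝ) ≤ s - t)]
    calc (s - t) * ‖R‖ ≤ (s - t) * (‖R‖ + 1) := by nlinarith [norm_nonneg R]
      _ < (‖R‖ + 1)⁻¹ * (‖R‖ + 1) := by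
          have : (0:ℝ) < ‖R‖ + 1 := by positivity
          exact mul_lt_mul_of_pos_right hlt this
      _ = 1 := by
          field_simp
  have hfac : t • (1 : Matrix (Fin n) (Fin n) ℝ) - M
      = (s • (1 : Matrix (Fin n) (Fin n) ℝ) - M) * (1 - P) := by
    rw [mul_sub, mul_one, hP, Matrix.mul_smul, hmulR]
    ext i' j'
    by_cases h : i' = j' <;>
      simp [Matrix.sub_apply, Matrix.smul_apply, Matrix.one_apply, h] <;> ring
  have hinv : (t • (1 : Matrix (Fin n) (Fin n) ℝ) - M)⁻¹ = (1 - P)⁻¹ * R := by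
    rw [hfac, Matrix.mul_inv_rev, hR]
  rw [hinv]
  exact mul_entry_nonneg (neumann hPnn hPn).2 hRs i j
end Neumann

lemma resolvent_nonneg {n : ℕ} {M : Matrix (Fin n) (Fin n) ℝ}
    (hMetz : IsMetzler M) (hH : IsHurwitz M) {s : ℝ} (hs : 0 ≤ s) :
    ∀ i j, 0 ≤ (s • (1 : Matrix (Fin n) (Fin n) ℝ) - M)⁻¹ i j := by
  obtain ⟨b, hb0, hbase⟩ := resolvent_nonneg_base hMetz
  by_cases hsb : b ≤ s
  · exact hbase s hsb
  push_neg at hsb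
  set S : Set ℝ := {u : ℝ | ∀ i j, 0 ≤ (((b - u) • (1 : Matrix (Fin n) (Fin n) ℝ) - M)⁻¹ i j)}
    with hS
  have hIcc : Set.Icc (0:ℝ) b ⊆ S := by
    have hcont : ∀ i j, ContinuousOn
        (fun u : ℝ => (((b - u) • (1 : Matrix (Fin n) (Fin n) ℝ) - M)⁻¹ i j)) (Set.Icc 0 b) := by
      intro i j
      have hcd : Continuous (fun u : ℝ => ((b - u) • (1 : Matrix (Fin n) (Fin n) ℝ) - M)) := by
        apply continuous_matrix
        intro i' j'
        simp only [Matrix.sub_apply, Matrix.smul_apply, smul_eq_mul]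
        exact ((continuous_const.sub continuous_id).mul continuous_const).sub continuous_const
      have hdet : ∀ u ∈ Set.Icc (0:ℝ) b,
          ((b - u) • (1 : Matrix (Fin n) (Fin n) ℝ) - M).det ≠ 0 :=
        fun u hu => det_resolvent_ne_zero hH (by simp at hu; linarith [hu.1, hu.2])
      have hco : ContinuousOn
          (fun u : ℝ => (((b - u) • (1 : Matrix (Fin n) (Fin n) ℝ) - M).det)⁻¹ *
            (((b - u) • (1 : Matrix (Fin n) (Fin n) ℝ) - M).adjugate i j)) (Set.Icc 0 b) :=
        (hcd.matrix_det.continuousOn.inv₀ hdet).mul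
          (hcd.matrix_adjugate.matrix_elem i j).continuousOn
      exact hco.congr fun u hu => by
        rw [Matrix.inv_def, Ring.inverse_eq_inv']
        simp [Matrix.smul_apply]
    have hclosed : IsClosed (S ∩ Set.Icc 0 b) := by
      have : S ∩ Set.Icc 0 b = (⋂ i, ⋂ j, (Set.Icc 0 b ∩
          (fun u : ℝ => (((b - u) • (1 : Matrix (Fin n) (Fin n) ℝ) - M)⁻¹ i j)) ⁻¹' Set.Ici 0))
          ∩ Set.Icc 0 b := by
        ext u
        simp only [Set.mem_inter_iff, Set.mem_iInter, Set.mem_setOf_eq, hS,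
          Set.mem_preimage, Set.mem_Ici]
        constructor
        · rintro ⟨h1, h2⟩; exact ⟨fun i j => ⟨h2, h1 i j⟩, h2⟩
        · rintro ⟨h1, h2⟩; exact ⟨fun i j => (h1 i j).2, h2⟩
      rw [this]
      exact (isClosed_iInter fun i => isClosed_iInter fun j =>
        (hcont i j).preimage_isClosed_of_isClosed isClosed_Icc isClosed_Ici).inter isClosed_Icc
    have hmem0 : (0:ℝ) ∈ S := by
      intro i j
      simpa using hbase b le_rfl i j
    refine IsClosed.Icc_subset_of_forall_exists_gt hclosed hmem0 ?_
    rintro x ⟨hxS, hx0, hxb⟩ y hy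
    obtain ⟨δ, hδ, hstep⟩ := resolvent_nonneg_step hH (s := b - x) (by linarith) hxS
    set ε : ℝ := min (min δ (b - x)) (y - x) with hε
    have hεpos : 0 < ε := by
      apply lt_min (lt_min hδ (by linarith))
      simpa using hy
    refine ⟨x + ε / 2, ?_, ?_, ?_⟩
    · -- x + ε/2 ∈ S
      have heq : b - (x + ε / 2) = (b - x) - ε / 2 := by ring
      intro i j
      rw [heq]
      refine hstep _ ?_ ?_ ?_ i j
      · have : ε ≤ b - x := le_trans (min_le_left _ _) (min_le_right _ _)
        linarith
      · linarith
      · have h1 : ε ≤ δ := le_trans (min_le_left _ _) (min_le_left _ _)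
        have h2 : (b - x) - ((b - x) - ε / 2) = ε / 2 := by ring
        rw [h2]
        linarith
    · linarith
    · have : ε ≤ y - x := min_le_right _ _
      linarith
  have : b - s ∈ Set.Icc (0:ℝ) b := ⟨by linarith, by linarith⟩
  have := hIcc this
  intro i j
  have heq : b - (b - s) = s := by ring
  rw [hS] at this
  simpa [heq] using this i j

lemma exists_pos_mulVec_neg {n : ℕ} [NeZero n] {M : Matrix (Fin n) (Fin n) ℝ}
    (hMetz : IsMetzler M) (hH : IsHurwitz M) :
    ∃ ξ : Fin n → ℝ, (∀ i, 0 < ξ i) ∧ ∀ i, (M *ᵥ ξ) i < 0 := by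
  have hdetM : (-M).det ≠ 0 := by
    simpa [zero_smul, zero_sub] using det_resolvent_ne_zero hH (le_refl (0:ℝ))
  have hR0 : ∀ i j, 0 ≤ (-M)⁻¹ i j := by
    intro i j
    simpa [zero_smul, zero_sub] using resolvent_nonneg hMetz hH (le_refl (0:ℝ)) i j
  have hu : IsUnit (-M).det := isUnit_iff_ne_zero.mpr hdetM
  have hleft : (-M)⁻¹ * (-M) = 1 := Matrix.nonsing_inv_mul _ hu
  have hright : (-M) * (-M)⁻¹ = 1 := Matrix.mul_nonsing_inv _ hu
  refine ⟨(-M)⁻¹ *ᵥ (fun _ => 1), fun i => ?_, fun i => ?_⟩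
  · have hrow : ∃ j, (-M)⁻¹ i j ≠ 0 := by
      by_contra hall
      push_neg at hall
      have h1 : ((-M)⁻¹ * (-M)) i i = 1 := by rw [hleft, Matrix.one_apply_eq]
      rw [Matrix.mul_apply] at h1
      simp [hall] at h1
    obtain ⟨j0, hj0⟩ := hrow
    have : (0:ℝ) < ∑ j, (-M)⁻¹ i j := by
      apply Finset.sum_pos' (fun j _ => hR0 i j)
      exact ⟨j0, Finset.mem_univ _, lt_of_le_of_ne (hR0 i j0) (Ne.symm hj0)⟩
    simpa [Matrix.mulVec, dotProduct] using this
  · have : M *ᵥ ((-M)⁻¹ *ᵥ (fun _ => 1)) = -(fun _ => (1:ℝ)) := by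
      have : M *ᵥ ((-M)⁻¹ *ᵥ (fun _ => 1)) = (M * (-M)⁻¹) *ᵥ (fun _ => 1) :=
        Matrix.mulVec_mulVec _ _ _
      rw [this]
      have hM : M * (-M)⁻¹ = -(1 : Matrix (Fin n) (Fin n) ℝ) := by
        have := hright
        rw [Matrix.neg_mul] at this
        linear_combination (norm := abel) -this
      rw [hM, Matrix.neg_mulVec, Matrix.one_mulVec]
    rw [this]
    norm_num

lemma hurwitz_of_pos_vec {n : ℕ} {M : Matrix (Fin n) (Fin n) ℝ} (hMetz : IsMetzler M)
    {v : Fin n → ℝ} (hv : ∀ i, 0 < v i) (hMv : ∀ i, (M *ᵥ v) i < 0) : IsHurwitz M := by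
  intro μ hμ
  set Mc : Matrix (Fin n) (Fin n) ℂ := M.map (fun x => (x : ℂ)) with hMc
  have hdet : (μ • (1 : Matrix (Fin n) (Fin n) ℂ) - Mc).det = 0 := by
    rw [spectrum.mem_iff, Algebra.algebraMap_eq_smul_one,
      Matrix.isUnit_iff_isUnit_det, isUnit_iff_ne_zero, not_not] at hμ
    exact hμ
  obtain ⟨x, hx0, hxe⟩ := (Matrix.exists_mulVec_eq_zero_iff).mpr hdet
  have hx : Mc *ᵥ x = μ • x := by
    have h := hxe
    rw [Matrix.sub_mulVec, sub_eq_zero] at h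
    rw [← h, Matrix.smul_mulVec, Matrix.one_mulVec]
  obtain ⟨j₀, hj₀⟩ := Function.ne_iff.mp hx0
  have : Nonempty (Fin n) := ⟨j₀⟩
  obtain ⟨i, -, hi⟩ := Finset.exists_max_image Finset.univ (fun j => ‖x j‖ / v j)
    Finset.univ_nonempty
  set r : ℝ := ‖x i‖ / v i with hr
  have hkey : ∀ j, ‖x j‖ ≤ r * v j := fun j => by
    have h := hi j (Finset.mem_univ j)
    rw [div_le_div_iff₀ (hv j) (hv i)] at h
    rw [hr, div_mul_eq_mul_div, le_div_iff₀ (hv i)]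
    linarith
  have hxj₀ : x j₀ ≠ 0 := by simpa using hj₀
  have hrpos : 0 < r := by
    have h1 : ‖x j₀‖ / v j₀ ≤ r := hi j₀ (Finset.mem_univ j₀)
    have h2 : 0 < ‖x j₀‖ := norm_pos_iff.mpr hxj₀
    have := div_pos h2 (hv j₀)
    linarith
  have hxi : ‖x i‖ = r * v i := by
    rw [hr, div_mul_cancel₀ _ (hv i).ne']
  have h1 : (μ - (M i i : ℂ)) * x i = ∑ j ∈ Finset.univ.erase i, Mc i j * x j := by
    have h := congrFun hx i
    simp only [Matrix.mulVec, dotProduct, Pi.smul_apply, smul_eq_mul] at h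
    rw [Finset.sum_erase_eq_sub (Finset.mem_univ i), h]
    have : Mc i i = (M i i : ℂ) := rfl
    rw [this]
    ring
  have h2 : ‖μ - (M i i : ℂ)‖ * ‖x i‖ ≤ ∑ j ∈ Finset.univ.erase i, M i j * ‖x j‖ := by
    rw [← norm_mul, h1]
    refine (norm_sum_le _ _).trans (Finset.sum_le_sum fun j hj => ?_)
    have hne : j ≠ i := Finset.ne_of_mem_erase hj
    have : ‖Mc i j * x j‖ = |M i j| * ‖x j‖ := by
      rw [norm_mul]
      congr 1
      simp [hMc, Matrix.map_apply, Complex.norm_real, Real.norm_eq_abs]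
    rw [this, abs_of_nonneg (hMetz i j (Ne.symm hne))]
  have h3 : ∑ j ∈ Finset.univ.erase i, M i j * ‖x j‖
      ≤ r * ∑ j ∈ Finset.univ.erase i, M i j * v j := by
    rw [Finset.mul_sum]
    refine Finset.sum_le_sum fun j hj => ?_
    have hne : j ≠ i := Finset.ne_of_mem_erase hj
    have hMij : 0 ≤ M i j := hMetz i j (Ne.symm hne)
    calc M i j * ‖x j‖ ≤ M i j * (r * v j) := by
          exact mul_le_mul_of_nonneg_left (hkey j) hMij
      _ = r * (M i j * v j) := by ring
  have h4 : ∑ j ∈ Finset.univ.erase i, M i j * v j < -(M i i * v i) := by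
    have h := hMv i
    simp only [Matrix.mulVec, dotProduct] at h
    have he : ∑ j ∈ Finset.univ.erase i, M i j * v j = (∑ j, M i j * v j) - M i i * v i :=
      Finset.sum_erase_eq_sub (Finset.mem_univ i)
    rw [he]
    linarith
  have h5 : ‖μ - (M i i : ℂ)‖ < -(M i i) := by
    have hvr : 0 < r * v i := mul_pos hrpos (hv i)
    have hlt : ‖μ - (M i i : ℂ)‖ * (r * v i) < (-(M i i)) * (r * v i) := by
      calc ‖μ - (M i i : ℂ)‖ * (r * v i) = ‖μ - (M i i : ℂ)‖ * ‖x i‖ := by rw [hxi]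
        _ ≤ r * ∑ j ∈ Finset.univ.erase i, M i j * v j := le_trans h2 h3
        _ < r * (-(M i i * v i)) := mul_lt_mul_of_pos_left h4 hrpos
        _ = (-(M i i)) * (r * v i) := by ring
    exact lt_of_mul_lt_mul_right hlt hvr.le
  have h6 : μ.re - M i i ≤ ‖μ - (M i i : ℂ)‖ := by
    have := Complex.re_le_norm (μ - (M i i : ℂ))
    simpa [Complex.sub_re, Complex.ofReal_re] using this
  linarith

theorem metzler_hurwitz_reconstruction
    (n : ℕ) (hn : 1 ≤ n)
    (B : Matrix (Fin n) (Fin n) ℝ)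
    (hBmetz : IsMetzler B) (hB : IsHurwitz B)
    (h : Fin n → ℝ) (k : Fin (n + 1) → ℝ)
    (hh : ∀ i, 0 ≤ h i)
    (hk : ∀ i : Fin n, 0 ≤ k i.castSucc)
    (hoff : ∀ i j : Fin n, i ≠ j →
      0 ≤ B i j - (h i * k j.castSucc) / Real.exp (k (Fin.last n)))
    (A : Matrix (Fin (n + 1)) (Fin (n + 1)) ℝ)
    (hA₁ : ∀ i j : Fin n, A i.castSucc j.castSucc =
      B i j - (h i * k j.castSucc) / Real.exp (k (Fin.last n)))
    (hA₂ : ∀ i : Fin n, A i.castSucc (Fin.last n) = h i)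
    (hA₃ : ∀ j : Fin n, A (Fin.last n) j.castSucc = k j.castSucc)
    (hA₄ : A (Fin.last n) (Fin.last n) = -Real.exp (k (Fin.last n))) :
    IsMetzler A ∧ IsHurwitz A := by
  have : NeZero n := ⟨by omega⟩
  set e : ℝ := Real.exp (k (Fin.last n)) with he
  have hepos : 0 < e := Real.exp_pos _
  have hAmetz : IsMetzler A := by
    intro i j hij
    induction i using Fin.lastCases with
    | last =>
      induction j using Fin.lastCases with
      | last => exact absurd rfl hij
      | cast j0 => rw [hA₃]; exact hk j0
    | cast i0 =>
      induction j using Fin.lastCases with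
      | last => rw [hA₂]; exact hh i0
      | cast j0 =>
        rw [hA₁]
        exact hoff i0 j0 (by rintro rfl; exact hij rfl)
  refine ⟨hAmetz, ?_⟩
  obtain ⟨ξ, hξpos, hξneg⟩ := exists_pos_mulVec_neg hBmetz hB
  have hne : (Finset.univ : Finset (Fin n)).Nonempty := Finset.univ_nonempty
  set ε : ℝ := Finset.univ.inf' hne (fun i => (-(B *ᵥ ξ) i) / (h i + 1)) with hε
  have hεpos : 0 < ε := by
    rw [hε, Finset.lt_inf'_iff]
    intro i _
    exact div_pos (neg_pos.mpr (hξneg i)) (by linarith [hh i])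
  have hkey : ∀ i, (B *ᵥ ξ) i + ε * h i < 0 := by
    intro i
    have h1 : ε ≤ (-(B *ᵥ ξ) i) / (h i + 1) :=
      Finset.inf'_le _ (Finset.mem_univ i)
    have h2 : ε * (h i + 1) ≤ -(B *ᵥ ξ) i := by
      rw [← le_div_iff₀ (by linarith [hh i] : (0:ℝ) < h i + 1)]
      exact h1
    nlinarith [hh i]
  set Sk : ℝ := ∑ j0 : Fin n, k j0.castSucc * ξ j0 with hSk
  have hSknn : 0 ≤ Sk := Finset.sum_nonneg fun j _ => mul_nonneg (hk j) (hξpos j).le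
  set t : ℝ := Sk / e + ε with ht
  have htpos : 0 < t := by positivity
  set v : Fin (n + 1) → ℝ := Fin.snoc ξ t with hv
  have hvpos : ∀ i, 0 < v i := by
    intro i
    induction i using Fin.lastCases with
    | last => rw [hv, Fin.snoc_last]; exact htpos
    | cast i0 => rw [hv, Fin.snoc_castSucc]; exact hξpos i0
  have hAv : ∀ i, (A *ᵥ v) i < 0 := by
    intro i
    have hexp : (A *ᵥ v) i = (∑ j0 : Fin n, A i j0.castSucc * ξ j0) + A i (Fin.last n) * t := by
      simp only [Matrix.mulVec, dotProduct]
      rw [Fin.sum_univ_castSucc]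
      simp [hv, Fin.snoc_castSucc, Fin.snoc_last]
    induction i using Fin.lastCases with
    | last =>
      rw [hexp, hA₄]
      have h1 : ∑ j0 : Fin n, A (Fin.last n) j0.castSucc * ξ j0 = Sk := by
        rw [hSk]
        exact Finset.sum_congr rfl fun j _ => by rw [hA₃]
      rw [h1, ht]
      have : -e * (Sk / e + ε) = -(Sk + e * ε) := by field_simp
      rw [this]
      nlinarith
    | cast i0 =>
      rw [hexp, hA₂]
      have h1 : ∑ j0 : Fin n, A i0.castSucc j0.castSucc * ξ j0
          = (∑ j0 : Fin n, B i0 j0 * ξ j0) - (h i0 / e) * Sk := by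
        rw [hSk, Finset.mul_sum, ← Finset.sum_sub_distrib]
        refine Finset.sum_congr rfl fun j _ => by rw [hA₁]; ring
      rw [h1, ht]
      have h2 : (∑ j0 : Fin n, B i0 j0 * ξ j0) = (B *ᵥ ξ) i0 := rfl
      rw [h2]
      have h3 : (B *ᵥ ξ) i0 - h i0 / e * Sk + h i0 * (Sk / e + ε)
          = (B *ᵥ ξ) i0 + ε * h i0 := by field_simp; ring
      rw [h3]
      exact hkey i0
  exact hurwitz_of_pos_vec hAmetz hvpos hAv
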